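/- For x, y ∈ Z[ω], if gde(|x|², √2) = gde(|y|², √2) then gde(x, √2) = gde(y, √2). -/

import Mathlib

/-!
Write `x = (√2)^j * u` with `√2 ∤ u`. As `√2` is real, `x * conj x = (√2)^(2j) * (u * conj u)`, so
`gde(|x|², √2) = 2j + gde(|u|², √2)` and it suffices that `2 ∤ u * conj u`. For
`u = a + bω + cω² + dω³` the coefficients of `1` and `ω` in `u * conj u` are `a² + b² + c² + d²`
and `ab + bc + cd - ad`; if both are even, then so are `a + c` and `b + d` (a check mod 2), and that
is exactly when `√2 ∣ u`. Hence `gde(x, √2) = ⌊gde(|x|², √2) / 2⌋`.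
-/

noncomputable section

open Complex

/-- The eighth root of unity ω = e^{iπ/4}. -/
def omg : ℂ := Complex.exp (Real.pi * Complex.I / 4)

/-- √2 as a complex number. -/
def rt2 : ℂ := (Real.sqrt 2 : ℝ)

/-- Membership in the ring Z[ω] = {a + bω + cω² + dω³ : a,b,c,d ∈ ℤ}. -/
def Zomega (z : ℂ) : Prop :=
  ∃ a b c d : ℤ, z = a + b * omg + c * omg ^ 2 + d * omg ^ 3

/-- Membership in the ring Z[1/√2, i] = {u/(√2)^n : u ∈ Z[ω], n ∈ ℕ}. -/
def ZRoot2i (z : ℂ) : Prop :=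
  ∃ u : ℂ, Zomega u ∧ ∃ n : ℕ, z = u / rt2 ^ n

/-- `b` divides `z` within the ring Z[ω]. -/
def ZDvd (b z : ℂ) : Prop := ∃ q : ℂ, Zomega q ∧ z = b * q

/-- `k` is the greatest dividing exponent of base `b` with respect to `z`:
`b^k` divides `z` in Z[ω], while `b^(k+1)` does not. -/
def IsGde (b z : ℂ) (k : ℕ) : Prop := ZDvd (b ^ k) z ∧ ¬ ZDvd (b ^ (k + 1)) z

/-- `k` is the smallest denominator exponent of base √2 with respect to `z`:
the smallest integer `k` such that `z·(√2)^k ∈ Z[ω]`. -/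
def IsSde (z : ℂ) (k : ℤ) : Prop :=
  Zomega (z * rt2 ^ k) ∧ ∀ j : ℤ, Zomega (z * rt2 ^ j) → k ≤ j

lemma rt2_sq : rt2 ^ 2 = 2 := by
  rw [rt2, ← ofReal_pow, Real.sq_sqrt zero_le_two, ofReal_ofNat]

lemma rt2_ne_zero : rt2 ≠ 0 := by
  intro h
  simpa [h] using rt2_sq

lemma conj_rt2 : starRingEnd ℂ rt2 = rt2 := conj_ofReal _

lemma omg_eq : omg = rt2 / 2 + rt2 / 2 * I := by
  have h : (Real.pi : ℂ) * I / 4 = (Real.pi / 4 : ℝ) * I := by push_cast; ring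
  rw [omg, h, exp_mul_I, ← ofReal_cos, ← ofReal_sin, Real.cos_pi_div_four,
    Real.sin_pi_div_four, rt2]
  push_cast; ring

lemma omg_sq : omg ^ 2 = I := by
  rw [omg_eq]; linear_combination (I / 2) * rt2_sq + rt2 ^ 2 / 4 * I_sq

lemma omg_pow_four : omg ^ 4 = -1 := by
  rw [show 4 = 2 * 2 from rfl, pow_mul, omg_sq, I_sq]

lemma rt2_eq : rt2 = omg - omg ^ 3 := by
  rw [show omg ^ 3 = omg * omg ^ 2 by ring, omg_sq, omg_eq]
  linear_combination rt2 / 2 * I_sq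

lemma conj_omg : starRingEnd ℂ omg = -omg ^ 3 := by
  rw [show omg ^ 3 = omg * omg ^ 2 by ring, omg_sq, omg_eq, map_add, map_mul, map_div₀,
    conj_rt2, conj_I, map_ofNat]
  linear_combination rt2 / 2 * I_sq

def omegaComb (a b c d : ℤ) : ℂ := a + b * omg + c * omg ^ 2 + d * omg ^ 3

lemma zomega_iff {z : ℂ} : Zomega z ↔ ∃ a b c d : ℤ, z = omegaComb a b c d := Iff.rfl

lemma omegaComb_mul (a b c d p q r s : ℤ) :
    omegaComb a b c d * omegaComb p q r s =
      omegaComb (a * p - b * s - c * r - d * q) (a * q + b * p - c * s - d * r)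
        (a * r + b * q + c * p - d * s) (a * s + b * r + c * q + d * p) := by
  simp only [omegaComb]; push_cast
  linear_combination (b * s + c * r + d * q + (c * s + d * r) * omg + d * s * omg ^ 2 : ℂ) *
    omg_pow_four

lemma conj_omegaComb (a b c d : ℤ) :
    starRingEnd ℂ (omegaComb a b c d) = omegaComb a (-d) (-c) (-b) := by
  simp only [omegaComb, map_add, map_mul, map_pow, map_intCast, conj_omg]; push_cast
  linear_combination (c * omg ^ 2 - d * omg * (omg ^ 4 - 1) : ℂ) * omg_pow_four

lemma rt2_mul_omegaComb (a b c d : ℤ) :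
    rt2 * omegaComb a b c d = omegaComb (b - d) (a + c) (b + d) (c - a) := by
  simp only [omegaComb]; rw [rt2_eq]; push_cast
  linear_combination (d - b - c * omg - d * omg ^ 2 : ℂ) * omg_pow_four

lemma two_mul_omegaComb (a b c d : ℤ) :
    2 * omegaComb a b c d = omegaComb (2 * a) (2 * b) (2 * c) (2 * d) := by
  simp only [omegaComb]; push_cast; ring

lemma omegaComb_sub (a b c d p q r s : ℤ) :
    omegaComb a b c d - omegaComb p q r s = omegaComb (a - p) (b - q) (c - r) (d - s) := by
  simp only [omegaComb]; push_cast; ring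

lemma int_eq_zero_of_add_mul_sqrt_two_eq_zero {u v : ℤ} (h : (u : ℝ) + v * √2 = 0) :
    u = 0 ∧ v = 0 := by
  obtain rfl | hv := eq_or_ne v 0
  · simpa using h
  · exact absurd h (by exact_mod_cast ((irrational_sqrt_two.intCast_mul hv).intCast_add u).ne_int 0)

lemma omegaComb_eq_zero {a b c d : ℤ} (h : omegaComb a b c d = 0) :
    a = 0 ∧ b = 0 ∧ c = 0 ∧ d = 0 := by
  have hω3 : omg ^ 3 = -(rt2 / 2) + rt2 / 2 * I := by
    rw [show omg ^ 3 = omg * omg ^ 2 by ring, omg_sq, omg_eq]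
    linear_combination rt2 / 2 * I_sq
  rw [omegaComb, omg_sq, hω3, omg_eq, rt2] at h
  have hre := congrArg re h
  have him := congrArg im h
  simp only [add_re, intCast_re, mul_re, div_ofNat_re, ofReal_re, I_re, mul_zero, div_ofNat_im,
    ofReal_im, zero_div, I_im, mul_one, sub_self, add_zero, intCast_im, add_im, mul_im, zero_add,
    zero_mul, sub_zero, neg_re, mul_neg, neg_im, neg_zero, zero_re, zero_im] at hre him
  obtain ⟨ha, hbd⟩ := int_eq_zero_of_add_mul_sqrt_two_eq_zero (u := 2 * a) (v := b - d)
    (by push_cast; linear_combination 2 * hre)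
  obtain ⟨hc, hbd'⟩ := int_eq_zero_of_add_mul_sqrt_two_eq_zero (u := 2 * c) (v := b + d)
    (by push_cast; linear_combination 2 * him)
  omega

lemma omegaComb_injective {a b c d p q r s : ℤ} (h : omegaComb a b c d = omegaComb p q r s) :
    a = p ∧ b = q ∧ c = r ∧ d = s := by
  have := omegaComb_eq_zero (a := a - p) (b := b - q) (c := c - r) (d := d - s)
    (by rw [← omegaComb_sub, h, sub_self])
  omega

namespace Zomega

lemma one : Zomega 1 := ⟨1, 0, 0, 0, by simp⟩

lemma rt2 : Zomega rt2 := ⟨0, 1, 0, -1, by rw [rt2_eq]; push_cast; ring⟩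

lemma mul {x y : ℂ} (hx : Zomega x) (hy : Zomega y) : Zomega (x * y) := by
  obtain ⟨a, b, c, d, rfl⟩ := hx
  obtain ⟨p, q, r, s, rfl⟩ := hy
  exact ⟨_, _, _, _, omegaComb_mul a b c d p q r s⟩

lemma pow {x : ℂ} (hx : Zomega x) (n : ℕ) : Zomega (x ^ n) := by
  induction n with
  | zero => simpa using one
  | succ n ih => simpa [pow_succ] using ih.mul hx

lemma conj {x : ℂ} (hx : Zomega x) : Zomega (starRingEnd ℂ x) := by
  obtain ⟨a, b, c, d, rfl⟩ := hx
  exact ⟨_, _, _, _, conj_omegaComb a b c d⟩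

end Zomega

lemma zdvd_one_iff {z : ℂ} : ZDvd 1 z ↔ Zomega z := by
  simp [ZDvd]

lemma ZDvd.pow_of_le {b z : ℂ} (hb : Zomega b) {m n : ℕ} (h : ZDvd (b ^ m) z) (hnm : n ≤ m) :
    ZDvd (b ^ n) z := by
  obtain ⟨q, hq, rfl⟩ := h
  refine ⟨b ^ (m - n) * q, (hb.pow _).mul hq, ?_⟩
  rw [← mul_assoc, ← pow_add, Nat.add_sub_cancel' hnm]

lemma zdvd_pow_add_mul_iff {b z : ℂ} (hb : b ≠ 0) (n m : ℕ) :
    ZDvd (b ^ (n + m)) (b ^ n * z) ↔ ZDvd (b ^ m) z := by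
  refine ⟨fun ⟨q, hq, h⟩ => ⟨q, hq, mul_left_cancel₀ (pow_ne_zero n hb) ?_⟩,
    fun ⟨q, hq, h⟩ => ⟨q, hq, by rw [h, pow_add, mul_assoc]⟩⟩
  rw [h, pow_add, mul_assoc]

lemma isGde_pow_mul_iff {b z : ℂ} (hb : b ≠ 0) (n m : ℕ) :
    IsGde b (b ^ n * z) (n + m) ↔ IsGde b z m := by
  rw [IsGde, IsGde, zdvd_pow_add_mul_iff hb, add_assoc, zdvd_pow_add_mul_iff hb]

lemma IsGde.unique {b z : ℂ} (hb : Zomega b) {k k' : ℕ} (h : IsGde b z k) (h' : IsGde b z k') :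
    k = k' := by
  by_contra hne
  rcases Nat.lt_or_gt_of_ne hne with hlt | hlt
  · exact h.2 (h'.1.pow_of_le hb hlt)
  · exact h'.2 (h.1.pow_of_le hb hlt)

lemma IsGde.exists_eq_pow_mul {b z : ℂ} (hb : b ≠ 0) {j : ℕ} (h : IsGde b z j) :
    ∃ u, z = b ^ j * u ∧ IsGde b u 0 := by
  obtain ⟨u, -, rfl⟩ := h.1
  exact ⟨u, rfl, (isGde_pow_mul_iff hb j 0).1 h⟩

lemma rt2_zdvd_omegaComb {a b c d : ℤ} (hac : 2 ∣ a + c) (hbd : 2 ∣ b + d) :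
    ZDvd rt2 (omegaComb a b c d) := by
  obtain ⟨u, hu⟩ := hac
  obtain ⟨v, hv⟩ := hbd
  refine ⟨omegaComb (v - d) u v (u - a), ⟨_, _, _, _, rfl⟩, ?_⟩
  rw [rt2_mul_omegaComb]
  congr 1 <;> omega

-- `hN` and `hM` concern the coefficients of `1` and `ω` in `x * conj x`, `x = a + bω + cω² + dω³`.
lemma two_dvd_add_of_two_dvd_normCoeffs {a b c d : ℤ}
    (hN : 2 ∣ a ^ 2 + b ^ 2 + c ^ 2 + d ^ 2) (hM : 2 ∣ a * b + b * c + c * d - a * d) :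
    2 ∣ a + c ∧ 2 ∣ b + d := by
  have hmod (x : ℤ) : 2 ∣ x ↔ (x : ZMod 2) = 0 := by
    exact_mod_cast (ZMod.intCast_zmod_eq_zero_iff_dvd x 2).symm
  simp only [hmod, Int.cast_add, Int.cast_sub, Int.cast_mul, Int.cast_pow] at hN hM ⊢
  revert hN hM
  generalize (a : ZMod 2) = a, (b : ZMod 2) = b, (c : ZMod 2) = c, (d : ZMod 2) = d
  revert a b c d
  decide

lemma rt2_zdvd_of_two_zdvd_mul_conj {x : ℂ} (hx : Zomega x)
    (h : ZDvd 2 (x * starRingEnd ℂ x)) : ZDvd rt2 x := by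
  obtain ⟨a, b, c, d, rfl⟩ := zomega_iff.1 hx
  obtain ⟨w, hw', hw⟩ := h
  obtain ⟨p, q, r, s, rfl⟩ := zomega_iff.1 hw'
  rw [conj_omegaComb, omegaComb_mul, two_mul_omegaComb] at hw
  obtain ⟨hp, hq, -, -⟩ := omegaComb_injective hw
  have hN : 2 ∣ a ^ 2 + b ^ 2 + c ^ 2 + d ^ 2 := ⟨p, by linear_combination hp⟩
  have hM : 2 ∣ a * b + b * c + c * d - a * d := ⟨q, by linear_combination hq⟩
  obtain ⟨hac, hbd⟩ := two_dvd_add_of_two_dvd_normCoeffs hN hM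
  exact rt2_zdvd_omegaComb hac hbd

lemma isGde_mul_conj_of_isGde_zero {u : ℂ} (h : IsGde rt2 u 0) :
    IsGde rt2 (u * starRingEnd ℂ u) 0 ∨ IsGde rt2 (u * starRingEnd ℂ u) 1 := by
  have hu : Zomega u := zdvd_one_iff.1 (pow_zero rt2 ▸ h.1)
  have hnorm : ¬ ZDvd (rt2 ^ 2) (u * starRingEnd ℂ u) := fun h2 =>
    h.2 (by simpa using rt2_zdvd_of_two_zdvd_mul_conj hu (rt2_sq ▸ h2))
  by_cases h1 : ZDvd (rt2 ^ 1) (u * starRingEnd ℂ u)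
  · exact Or.inr ⟨h1, hnorm⟩
  · exact Or.inl ⟨pow_zero rt2 ▸ zdvd_one_iff.2 (hu.mul hu.conj), h1⟩

lemma IsGde.div_two_of_mul_conj {x : ℂ} {j k : ℕ} (hj : IsGde rt2 x j)
    (hk : IsGde rt2 (x * starRingEnd ℂ x) k) : k / 2 = j := by
  obtain ⟨u, rfl, hu⟩ := hj.exists_eq_pow_mul rt2_ne_zero
  have hnorm : rt2 ^ j * u * starRingEnd ℂ (rt2 ^ j * u) =
      rt2 ^ (2 * j) * (u * starRingEnd ℂ u) := by
    rw [map_mul, map_pow, conj_rt2]; ring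
  rw [hnorm] at hk
  rcases isGde_mul_conj_of_isGde_zero hu with h | h <;>
  · have := hk.unique Zomega.rt2 ((isGde_pow_mul_iff rt2_ne_zero _ _).2 h)
    omega

theorem stmt8_general (x y : ℂ) (k jx jy : ℕ)
    (hkx : IsGde rt2 (x * (starRingEnd ℂ) x) k)
    (hky : IsGde rt2 (y * (starRingEnd ℂ) y) k)
    (hjx : IsGde rt2 x jx) (hjy : IsGde rt2 y jy) :
    jx = jy := by
  rw [← hjx.div_two_of_mul_conj hkx, ← hjy.div_two_of_mul_conj hky]

/-- If gde(|x|², √2) = gde(|y|², √2) then gde(x, √2) = gde(y, √2). -/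
theorem stmt8 (x y : ℂ) (hx : Zomega x) (hy : Zomega y)
    (hx0 : x ≠ 0) (hy0 : y ≠ 0) (k jx jy : ℕ)
    (hkx : IsGde rt2 (x * (starRingEnd ℂ) x) k)
    (hky : IsGde rt2 (y * (starRingEnd ℂ) y) k)
    (hjx : IsGde rt2 x jx) (hjy : IsGde rt2 y jy) :
    jx = jy :=
  stmt8_general x y k jx jy hkx hky hjx hjy
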